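/- Let A = ⊕_{i} A_i be a ℤ-graded ring and let 0 → N →ι X →g M → 0 be a short exact sequence of graded left A-modules and degree-zero homomorphisms. Suppose there are finitely many homogeneous elements x_1, …, x_r ∈ X, with x_s homogeneous of degree d_s, such that g(x_1), …, g(x_r) generate M as an A-module. Let c ∈ ℤ and suppose: (a) the syzygy module K = { (a_1, …, a_r) ∈ A^r : Σ_s a_s · g(x_s) = 0 } is generated as a left A-module by elements (a_1, …, a_r) that are homogeneous of some total degree e ≤ c, meaning a_s ∈ A_{e − d_s} for all s; and (b) N_j = 0 for all j ≤ c. Then the sequence splits, i.e. g admits an A-linear section M → X. (This is the splitting statement underlying the claim 'Ext^1_{Gr A}(M, N(ℓ)) = 0 for ℓ ≪ 0' in the proof of the paper's Lemma 2.3: once the shifted module N(ℓ) lives in degrees above the degrees of the generators of the syzygies of M, every extension of M by N(ℓ) splits.) -/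

import Mathlib

set_option synthInstance.maxHeartbeats 1000000
set_option maxHeartbeats 1600000

open DirectSum

/-- A degree-zero additive map commutes with taking homogeneous components. -/
lemma stmt_8_decompose_comm {N X : Type} [AddCommGroup N] [AddCommGroup X]
    (𝒩 : ℤ → AddSubgroup N) [DirectSum.Decomposition 𝒩]
    (𝒳 : ℤ → AddSubgroup X) [DirectSum.Decomposition 𝒳]
    (f : N →+ X) (hf : ∀ j : ℤ, ∀ v ∈ 𝒩 j, f v ∈ 𝒳 j) (n : N) (j : ℤ) :
    f ((DirectSum.decompose 𝒩 n j : N)) = (DirectSum.decompose 𝒳 (f n) j : X) := by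
  induction n using DirectSum.Decomposition.inductionOn 𝒩 with
  | zero => simp
  | @homogeneous i m =>
      rcases eq_or_ne i j with rfl | hne
      · rw [DirectSum.decompose_of_mem_same 𝒩 m.2,
          DirectSum.decompose_of_mem_same 𝒳 (hf i m.1 m.2)]
      · rw [DirectSum.decompose_of_mem_ne 𝒩 m.2 hne,
          DirectSum.decompose_of_mem_ne 𝒳 (hf i m.1 m.2) hne, map_zero]
  | add m m' hm hm' =>
      rw [DirectSum.decompose_add, DirectSum.add_apply, AddSubgroup.coe_add,
        map_add, hm, hm', f.map_add, DirectSum.decompose_add,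
        DirectSum.add_apply, AddSubgroup.coe_add]

/-- **Splitting statement underlying `Ext¹_{Gr A}(M, N(ℓ)) = 0` for `ℓ ≪ 0`**
(from the proof of Lemma 2.3).  Let `A` be a ℤ-graded ring and
`0 → N →ι X →g M → 0` a short exact sequence of graded left `A`-modules and
degree-zero homomorphisms.  Suppose `x 1, …, x r ∈ X` are homogeneous of
degrees `dg 1, …, dg r` with `g (x 1), …, g (x r)` generating `M`, the syzygy
module `K = { a ∈ Aʳ | Σ_s (a s) • g (x s) = 0 }` is generated by elements
that are homogeneous of some total degree `e ≤ c` (i.e. `a s ∈ A_{e - dg s}`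
for all `s`), and `N_j = 0` for all `j ≤ c`.  Then the sequence splits: `g`
admits an `A`-linear section. -/
theorem stmt_8 (A : Type) [Ring A] (𝒜 : ℤ → AddSubgroup A) [GradedRing 𝒜]
    (N X M : Type) [AddCommGroup N] [Module A N]
    [AddCommGroup X] [Module A X] [AddCommGroup M] [Module A M]
    (𝒩 : ℤ → AddSubgroup N) [DirectSum.Decomposition 𝒩]
    (𝒳 : ℤ → AddSubgroup X) [DirectSum.Decomposition 𝒳]
    (ℳ : ℤ → AddSubgroup M) [DirectSum.Decomposition ℳ]
    -- `N`, `X`, `M` are graded `A`-modules: `A_i • (-)_j ⊆ (-)_{i+j}`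
    (h𝒩 : ∀ (i j : ℤ), ∀ r ∈ 𝒜 i, ∀ v ∈ 𝒩 j, r • v ∈ 𝒩 (i + j))
    (h𝒳 : ∀ (i j : ℤ), ∀ r ∈ 𝒜 i, ∀ v ∈ 𝒳 j, r • v ∈ 𝒳 (i + j))
    (hℳ : ∀ (i j : ℤ), ∀ r ∈ 𝒜 i, ∀ v ∈ ℳ j, r • v ∈ ℳ (i + j))
    -- the short exact sequence `0 → N → X → M → 0`
    (ι : N →ₗ[A] X) (g : X →ₗ[A] M)
    (hι : Function.Injective ι) (hg : Function.Surjective g)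
    (hιg : LinearMap.range ι = LinearMap.ker g)
    -- `ι` and `g` are degree-zero homomorphisms
    (hιgr : ∀ j : ℤ, ∀ v ∈ 𝒩 j, ι v ∈ 𝒳 j)
    (hggr : ∀ j : ℤ, ∀ v ∈ 𝒳 j, g v ∈ ℳ j)
    -- homogeneous elements `x s ∈ X` of degree `dg s` whose images generate `M`
    (r : ℕ) (x : Fin r → X) (dg : Fin r → ℤ)
    (hx : ∀ s : Fin r, x s ∈ 𝒳 (dg s))
    (hgen : Submodule.span A (Set.range fun s => g (x s)) = ⊤)
    (c : ℤ)
    -- (a) the syzygy module of `(g (x s))_s` is generated by elements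
    -- homogeneous of some total degree `e ≤ c`
    (hsyz : ∀ a : Fin r → A, (∑ s, a s • g (x s)) = 0 →
      a ∈ Submodule.span A {b : Fin r → A |
        (∑ s, b s • g (x s)) = 0 ∧ ∃ e ≤ c, ∀ s, b s ∈ 𝒜 (e - dg s)})
    -- (b) `N_j = 0` for all `j ≤ c`
    (hN : ∀ j ≤ c, 𝒩 j = ⊥) :
    ∃ h : M →ₗ[A] X, g ∘ₗ h = LinearMap.id := by
  classical
  -- the two "linear combination" maps
  set φ : (Fin r → A) →ₗ[A] M := Fintype.linearCombination A (fun s => g (x s)) with hφdef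
  set ψ : (Fin r → A) →ₗ[A] X := Fintype.linearCombination A x with hψdef
  have hφ : ∀ a : Fin r → A, φ a = ∑ s, a s • g (x s) := fun a => rfl
  have hψ : ∀ a : Fin r → A, ψ a = ∑ s, a s • x s := fun a => rfl
  have hφsurj : Function.Surjective φ := by
    rw [← LinearMap.range_eq_top, hφdef, Fintype.range_linearCombination, hgen]
  -- `ψ` kills every homogeneous syzygy of degree `≤ c`
  have hkill : ∀ b : Fin r → A, (∑ s, b s • g (x s)) = 0 →
      (∃ e ≤ c, ∀ s, b s ∈ 𝒜 (e - dg s)) → ψ b = 0 := by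
    rintro b hb0 ⟨e, hec, hbs⟩
    have hy : ψ b ∈ 𝒳 e := by
      rw [hψ]
      refine AddSubgroup.sum_mem _ fun s _ => ?_
      have := h𝒳 (e - dg s) (dg s) _ (hbs s) _ (hx s)
      rwa [sub_add_cancel] at this
    have hgy : g (ψ b) = 0 := by
      rw [hψ, map_sum]
      simpa using hb0
    obtain ⟨n, hn⟩ : ψ b ∈ LinearMap.range ι := by rw [hιg]; exact hgy
    -- all homogeneous components of `n` vanish
    have hd0 : DirectSum.decompose 𝒩 n = 0 := by
      refine DFinsupp.ext fun j => ?_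
      rw [DFinsupp.zero_apply]
      by_cases hjc : j ≤ c
      · exact Subtype.ext ((AddSubgroup.eq_bot_iff_forall _).mp (hN j hjc) _
          (DirectSum.decompose 𝒩 n j).2)
      · have hne : e ≠ j := fun h => hjc (h ▸ hec)
        have := stmt_8_decompose_comm 𝒩 𝒳 ι.toAddMonoidHom hιgr n j
        simp only [LinearMap.toAddMonoidHom_coe] at this
        rw [hn, DirectSum.decompose_of_mem_ne 𝒳 hy hne] at this
        refine Subtype.ext ?_
        have : ι ((DirectSum.decompose 𝒩 n j : N)) = ι 0 := by simpa using this
        simpa using hι this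
    have hn0 : n = 0 := by
      have := congrArg (DirectSum.decompose 𝒩).symm hd0
      simpa using this
    rw [← hn, hn0, map_zero]
  -- `ker φ ≤ ker ψ`
  have hle : LinearMap.ker φ ≤ LinearMap.ker ψ := by
    intro a ha
    have ha' : (∑ s, a s • g (x s)) = 0 := by rw [← hφ]; exact ha
    have hmem := hsyz a ha'
    have hsub : {b : Fin r → A |
        (∑ s, b s • g (x s)) = 0 ∧ ∃ e ≤ c, ∀ s, b s ∈ 𝒜 (e - dg s)} ⊆
        (LinearMap.ker ψ : Set (Fin r → A)) := by
      rintro b ⟨hb0, hbe⟩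
      exact hkill b hb0 hbe
    exact (Submodule.span_le.mpr hsub) hmem
  -- build the section
  let φbar : ((Fin r → A) ⧸ LinearMap.ker φ) →ₗ[A] M :=
    Submodule.liftQ _ φ le_rfl
  let ψbar : ((Fin r → A) ⧸ LinearMap.ker φ) →ₗ[A] X :=
    Submodule.liftQ _ ψ hle
  have hφbar_bij : Function.Bijective φbar := by
    constructor
    · rw [← LinearMap.ker_eq_bot]
      exact Submodule.ker_liftQ_eq_bot _ _ _ le_rfl
    · intro m
      obtain ⟨a, ha⟩ := hφsurj m
      exact ⟨Submodule.Quotient.mk a, ha⟩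
  let eqv : ((Fin r → A) ⧸ LinearMap.ker φ) ≃ₗ[A] M := LinearEquiv.ofBijective φbar hφbar_bij
  refine ⟨ψbar ∘ₗ (eqv.symm : M →ₗ[A] _), ?_⟩
  ext m
  obtain ⟨a, ha⟩ := hφsurj m
  have he : eqv (Submodule.Quotient.mk a) = m := by
    simpa [eqv, φbar, Submodule.liftQ_apply] using ha
  have hsymm : eqv.symm m = Submodule.Quotient.mk a := by
    rw [← he, LinearEquiv.symm_apply_apply]
  simp only [LinearMap.comp_apply, LinearMap.id_apply, LinearEquiv.coe_coe, hsymm]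
  rw [Submodule.liftQ_apply]
  rw [hψ, map_sum]
  simp only [map_smul]
  rw [← hφ, ha]
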